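/- arXiv:2509.13718 — 3 statements merged into one kernel-verified Lean document; each statement's English description precedes it below -/
import Mathlib

section
/- For every vector X of an oriented matroid M, the size of the support of X satisfies |supp(X)| ≤ rk(M) + height(X), where height(X) is the length of a maximal chain from the zero vector to X in the lattice of vectors of M. -/
/-- A sign vector on a ground set `E`. -/
abbrev SignVec (E : Type*) := E → SignType

namespace SignVec

/-- The support of a sign vector. -/
def support {E : Type*} (X : SignVec E) : Set E := {e | X e ≠ 0}

/-- The conformal (partial) order on sign vectors: `X ⪯ Y` iff `X e ≠ 0 → X e = Y e`. -/
def le {E : Type*} (X Y : SignVec E) : Prop := ∀ e, X e ≠ 0 → Y e = X e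

/-- Strict conformal order. -/
def lt {E : Type*} (X Y : SignVec E) : Prop := le X Y ∧ X ≠ Y

/-- A sign vector is positive if it has no negative entry. -/
def IsPositive {E : Type*} (X : SignVec E) : Prop := ∀ e, 0 ≤ X e

/-- Composition of sign vectors. -/
def comp {E : Type*} (X Y : SignVec E) : SignVec E := fun e => if X e = 0 then Y e else X e

/-- Orthogonality of sign vectors. -/
def Orth {E : Type*} (X Y : SignVec E) : Prop :=
  (∃ e, X e * Y e = 1) ↔ (∃ e, X e * Y e = -1)

end SignVec

/-- An oriented matroid, given by its signed circuit axioms. -/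
structure OrientedMatroid (E : Type*) [Fintype E] [DecidableEq E] where
  circuits : Set (SignVec E)
  ne_zero : ∀ C ∈ circuits, C ≠ 0
  neg_mem : ∀ C ∈ circuits, -C ∈ circuits
  support_incomparable : ∀ C ∈ circuits, ∀ D ∈ circuits,
      SignVec.support C ⊆ SignVec.support D → C = D ∨ C = -D
  elimination : ∀ C ∈ circuits, ∀ D ∈ circuits, C ≠ -D → ∀ e, C e = 1 → D e = -1 →
      ∃ Z ∈ circuits, Z e = 0 ∧
        (∀ f, Z f = 1 → C f = 1 ∨ D f = 1) ∧
        (∀ f, Z f = -1 → C f = -1 ∨ D f = -1)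

namespace OrientedMatroid

variable {E : Type*} [Fintype E] [DecidableEq E] (M : OrientedMatroid E)

/-- Independent sets of the underlying matroid: sets containing no circuit support. -/
def Indep (S : Set E) : Prop := ∀ C ∈ M.circuits, ¬ SignVec.support C ⊆ S

/-- The rank of the (underlying matroid of the) oriented matroid. -/
noncomputable def rank : ℕ := sSup {k | ∃ S : Set E, M.Indep S ∧ S.ncard = k}

/-- Positive circuits. -/
def IsPositiveCircuit (C : SignVec E) : Prop := C ∈ M.circuits ∧ SignVec.IsPositive C

/-- Vectors: compositions of (finitely many) circuits, including the zero vector. -/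
def IsVector (X : SignVec E) : Prop :=
  ∃ l : List (SignVec E), (∀ C ∈ l, C ∈ M.circuits) ∧ X = l.foldr SignVec.comp 0

/-- The height of a vector in the lattice of vectors: the size of a maximal chain from
the zero vector to `X`, minus one. -/
noncomputable def height (X : SignVec E) : ℕ :=
  sSup {h | ∃ c : Fin (h+1) → SignVec E, (∀ i, M.IsVector (c i)) ∧ c 0 = 0 ∧
    c (Fin.last h) = X ∧ ∀ i j : Fin (h+1), i < j → SignVec.lt (c i) (c j)}

/-- Covectors: sign vectors orthogonal to every circuit. -/
def IsCovector (Y : SignVec E) : Prop := ∀ C ∈ M.circuits, SignVec.Orth C Y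

/-- Topes: maximal covectors (for the conformal order). -/
def IsTope (T : SignVec E) : Prop :=
  M.IsCovector T ∧ ∀ Y, M.IsCovector Y → SignVec.le T Y → Y = T

/-- The oriented matroid is uniform of rank `r`: circuit supports are exactly the
`(r+1)`-element subsets of the ground set. -/
def IsUniform (r : ℕ) : Prop :=
  (∀ C ∈ M.circuits, (SignVec.support C).ncard = r + 1) ∧
  (∀ S : Set E, S.ncard = r + 1 → ∃ C ∈ M.circuits, SignVec.support C = S)

end OrientedMatroid

/-!
We prove the stronger bound `|supp X| ≤ r(supp X) + height X`, with `r` the rank function of the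
underlying matroid. Write `X = X' ∘ C` with `X'` a vector and `C` a circuit. If passing from
`supp X'` to `supp X` raises the nullity by at most one, then `X' < X` supplies the missing unit of
height. Otherwise a basis count yields a set `G ⊇ supp C` of nullity at most two inside
`supp X' ∪ supp C` containing a second circuit; inside `G`, where eliminations can be made to keep
a prescribed element, repeated elimination with `C` produces a circuit `D` that agrees with `C`
outside `supp X'` and satisfies `∅ ≠ supp D \ supp X' ⊊ supp C \ supp X'`. Then
`X = (X' ∘ D) ∘ C`, and both steps `X' ↦ X' ∘ D ↦ X` are handled by induction on
`|supp C \ supp X'|`.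
-/

open Set

lemma SignType.eq_neg_of_ne {a b : SignType} (ha : a ≠ 0) (hb : b ≠ 0) (hab : a ≠ b) : b = -a := by
  revert a b; decide

lemma SignType.eq_zero_of_eq_neg {a : SignType} (h : a = -a) : a = 0 := by
  revert a; decide

namespace SignVec

variable {E : Type*}

lemma mem_support {X : SignVec E} {e : E} : e ∈ support X ↔ X e ≠ 0 := Iff.rfl

@[simp] lemma support_neg (X : SignVec E) : support (-X) = support X := by
  ext e
  simp [support, SignType.neg_eq_zero_iff]

lemma le_trans {X Y Z : SignVec E} (hXY : le X Y) (hYZ : le Y Z) : le X Z := fun e he =>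
  (hYZ e (by rwa [hXY e he])).trans (hXY e he)

lemma le_antisymm {X Y : SignVec E} (hXY : le X Y) (hYX : le Y X) : X = Y := by
  funext e
  by_cases hX : X e = 0
  · by_cases hY : Y e = 0
    · rw [hX, hY]
    · exact hYX e hY
  · exact (hXY e hX).symm

lemma lt_of_le_of_lt {X Y Z : SignVec E} (hXY : le X Y) (hYZ : lt Y Z) : lt X Z :=
  ⟨le_trans hXY hYZ.1, fun h => hYZ.2 (le_antisymm hYZ.1 (h ▸ hXY))⟩

lemma support_subset_of_le {X Y : SignVec E} (h : le X Y) : support X ⊆ support Y :=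
  fun e he => by rw [mem_support, h e he]; exact he

lemma support_ssubset_of_lt {X Y : SignVec E} (h : lt X Y) : support X ⊂ support Y := by
  refine (support_subset_of_le h.1).ssubset_of_ne fun hXY => h.2 (le_antisymm h.1 fun e he => ?_)
  exact (h.1 e (hXY ▸ he : e ∈ support X)).symm

@[simp] lemma zero_comp (X : SignVec E) : comp 0 X = X := funext fun _ => if_pos rfl

@[simp] lemma comp_zero (X : SignVec E) : comp X 0 = X := funext fun e => by
  by_cases h : X e = 0 <;> simp [comp, h]

lemma comp_assoc (X Y Z : SignVec E) : comp (comp X Y) Z = comp X (comp Y Z) :=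
  funext fun e => by by_cases hX : X e = 0 <;> by_cases hY : Y e = 0 <;> simp [comp, hX, hY]

lemma support_comp (X Y : SignVec E) : support (comp X Y) = support X ∪ support Y := by
  ext e
  by_cases hX : X e = 0 <;> simp [support, comp, hX]

lemma le_comp (X Y : SignVec E) : le X (comp X Y) := fun _ he => if_neg he

lemma comp_eq_self_of_support_subset {X Y : SignVec E} (h : support Y ⊆ support X) :
    comp X Y = X := funext fun e => by
  by_cases hX : X e = 0
  · rw [comp, if_pos hX, hX]
    by_contra hY
    exact h hY hX
  · exact if_neg hX

lemma lt_comp_of_not_subset {X Y : SignVec E} (h : ¬ support Y ⊆ support X) :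
    lt X (comp X Y) :=
  ⟨le_comp X Y, fun hXY => h (by rw [hXY, support_comp]; exact subset_union_right)⟩

lemma comp_comp_eq_of_agree {X Y Z : SignVec E} (h : ∀ e ∈ support Y \ support X, Y e = Z e) :
    comp (comp X Y) Z = comp X Z := funext fun e => by
  by_cases hX : X e = 0
  · by_cases hY : Y e = 0
    · simp [comp, hX, hY]
    · simp [comp, hX, h e ⟨hY, by simpa [mem_support] using hX⟩]
  · simp [comp, hX]

lemma support_subset_union_of_conformal {P Q Z : SignVec E}
    (hZ : ∀ e, Z e ≠ 0 → Z e = P e ∨ Z e = Q e) : support Z ⊆ support P ∪ support Q :=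
  fun e he => (hZ e he).imp (fun h => by rwa [mem_support, ← h]) fun h => by rwa [mem_support, ← h]

lemma foldr_comp (l : List (SignVec E)) (Y : SignVec E) :
    l.foldr comp Y = comp (l.foldr comp 0) Y := by
  induction l with
  | nil => simp
  | cons X l ih => simp only [List.foldr_cons, ih, comp_assoc]

end SignVec

open SignVec

namespace OrientedMatroid

variable {E : Type*} [Fintype E] [DecidableEq E] {M : OrientedMatroid E}

lemma support_nonempty {C : SignVec E} (hC : C ∈ M.circuits) : (support C).Nonempty := by
  by_contra h
  exact M.ne_zero C hC (funext fun e => not_not.1 fun he => h ⟨e, he⟩)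

lemma support_eq_of_subset {C D : SignVec E} (hC : C ∈ M.circuits) (hD : D ∈ M.circuits)
    (h : support C ⊆ support D) : support C = support D := by
  rcases M.support_incomparable C hC D hD h with rfl | rfl
  · rfl
  · exact support_neg D

lemma exists_circuit_eq_sign {C : SignVec E} (hC : C ∈ M.circuits) {e : E}
    (he : e ∈ support C) {s : SignType} (hs : s ≠ 0) :
    ∃ C' ∈ M.circuits, support C' = support C ∧ C' e = s := by
  by_cases hCe : C e = s
  · exact ⟨C, hC, rfl, hCe⟩
  · refine ⟨-C, M.neg_mem C hC, support_neg C, ?_⟩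
    exact (SignType.eq_neg_of_ne he hs hCe).symm

lemma exists_circuit_elim {P Q : SignVec E} (hP : P ∈ M.circuits) (hQ : Q ∈ M.circuits)
    (hPQ : P ≠ -Q) {f : E} (hPf : P f ≠ 0) (hQf : Q f = -P f) :
    ∃ Z ∈ M.circuits, Z f = 0 ∧ ∀ e, Z e ≠ 0 → Z e = P e ∨ Z e = Q e := by
  have key : ∀ P Q : SignVec E, P ∈ M.circuits → Q ∈ M.circuits → P ≠ -Q → P f = 1 →
      Q f = -1 → ∃ Z ∈ M.circuits, Z f = 0 ∧ ∀ e, Z e ≠ 0 → Z e = P e ∨ Z e = Q e := by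
    intro P Q hP hQ hPQ hP1 hQ1
    obtain ⟨Z, hZ, hZf, hpos, hneg⟩ := M.elimination P hP Q hQ hPQ f hP1 hQ1
    refine ⟨Z, hZ, hZf, fun e he => ?_⟩
    rcases SignType.trichotomy (Z e) with h | h | h
    · rw [h]; exact (hneg e h).imp Eq.symm Eq.symm
    · exact absurd h he
    · rw [h]; exact (hpos e h).imp Eq.symm Eq.symm
  rcases SignType.trichotomy (P f) with h | h | h
  · have hQPf : Q ≠ -P := fun h' => hPQ (by rw [h', neg_neg])
    obtain ⟨Z, hZ, hZf, hZc⟩ := key Q P hQ hP hQPf (by rw [hQf, h]; rfl) h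
    exact ⟨Z, hZ, hZf, fun e he => (hZc e he).symm⟩
  · exact absurd h hPf
  · exact key P Q hP hQ hPQ h (by rw [hQf, h])

lemma exists_circuit_subset_union_sdiff {C D : SignVec E} (hC : C ∈ M.circuits)
    (hD : D ∈ M.circuits) (hCD : support C ≠ support D) {e : E} (heC : e ∈ support C)
    (heD : e ∈ support D) :
    ∃ Z ∈ M.circuits, support Z ⊆ (support C ∪ support D) \ {e} := by
  obtain ⟨D', hD', hD'D, hD'e⟩ := exists_circuit_eq_sign hD heD
    (show -C e ≠ 0 by rw [Ne, SignType.neg_eq_zero_iff]; exact heC)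
  have hCD' : C ≠ -D' := fun h => hCD (by rw [h, support_neg, hD'D])
  obtain ⟨Z, hZ, hZe, hZc⟩ := exists_circuit_elim hC hD' hCD' heC hD'e
  refine ⟨Z, hZ, fun x hx => ⟨?_, fun hxe => hx (by rw [mem_singleton_iff.1 hxe, hZe])⟩⟩
  rw [← hD'D]
  exact support_subset_union_of_conformal hZc hx

lemma indep_empty : M.Indep ∅ := fun _ hC h =>
  (support_nonempty hC).ne_empty (subset_empty_iff.1 h)

lemma Indep.subset {I J : Set E} (hJ : M.Indep J) (hIJ : I ⊆ J) : M.Indep I :=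
  fun C hC h => hJ C hC (h.trans hIJ)

lemma not_indep_iff {S : Set E} : ¬ M.Indep S ↔ ∃ C ∈ M.circuits, support C ⊆ S := by
  simp [Indep]

lemma indep_support_sdiff_singleton {C : SignVec E} (hC : C ∈ M.circuits) (x : E)
    (hx : x ∈ support C) : M.Indep (support C \ {x}) := fun _ hD h =>
  (h (support_eq_of_subset hD hC (h.trans sdiff_subset) ▸ hx)).2 rfl

lemma Indep.mem_support_of_subset_insert {I : Set E} (hI : M.Indep I) {C : SignVec E}
    (hC : C ∈ M.circuits) {e : E} (hCI : support C ⊆ insert e I) : e ∈ support C := by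
  by_contra he
  exact hI C hC fun x hx => (hCI hx).resolve_left (by rintro rfl; exact he hx)

lemma Indep.support_eq_of_subset_insert {I : Set E} (hI : M.Indep I) {C D : SignVec E}
    (hC : C ∈ M.circuits) (hD : D ∈ M.circuits) {e : E} (hCI : support C ⊆ insert e I)
    (hDI : support D ⊆ insert e I) : support C = support D := by
  by_contra hCD
  obtain ⟨Z, hZ, hZs⟩ := exists_circuit_subset_union_sdiff hC hD hCD
    (hI.mem_support_of_subset_insert hC hCI) (hI.mem_support_of_subset_insert hD hDI)
  refine hI Z hZ fun x hx => ?_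
  have hx' := hZs hx
  exact ((union_subset hCI hDI) hx'.1).resolve_left hx'.2

lemma Indep.indep_insert_sdiff_of_mem_support {I : Set E} (hI : M.Indep I) {C : SignVec E}
    (hC : C ∈ M.circuits) {f g : E} (hCI : support C ⊆ insert f I) (hg : g ∈ support C)
    (hgf : g ≠ f) : M.Indep (insert f (I \ {g})) := fun C' hC' hC'I => by
  have hCC' := hI.support_eq_of_subset_insert hC hC' hCI
    (hC'I.trans (insert_subset_insert sdiff_subset))
  rcases hC'I (hCC' ▸ hg) with h | h
  · exact hgf h
  · exact h.2 rfl

lemma Indep.exists_insert_of_ncard_lt {I J : Set E} (hI : M.Indep I) (hJ : M.Indep J)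
    (hIJ : I.ncard < J.ncard) : ∃ e ∈ J, e ∉ I ∧ M.Indep (insert e I) := by
  obtain ⟨n, hn⟩ : ∃ n, (J \ I).ncard = n := ⟨_, rfl⟩
  induction n using Nat.strong_induction_on generalizing I with
  | _ n ih =>
  by_contra! hcon
  obtain ⟨f, hfJ, hfI⟩ : ∃ f ∈ J, f ∉ I :=
    not_subset.1 fun h => (ncard_le_ncard h).not_gt hIJ
  obtain ⟨C, hC, hCI⟩ := not_indep_iff.1 (hcon f hfJ hfI)
  obtain ⟨g, hgC, hgJ⟩ : ∃ g ∈ support C, g ∉ J := not_subset.1 fun h => hJ C hC h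
  have hgf : g ≠ f := by rintro rfl; exact hgJ hfJ
  have hgI : g ∈ I := (hCI hgC).resolve_left hgf
  -- exchanging `g` for `f` brings `I` closer to `J`
  set I' := insert f (I \ {g})
  have hcard : I'.ncard = I.ncard := by
    rw [ncard_insert_of_notMem (fun h => hfI h.1), ncard_sdiff_singleton_add_one hgI]
  have hlt : (J \ I').ncard < n := by
    refine hn ▸ ncard_lt_ncard ⟨fun x hx => ⟨hx.1, fun hxI => hx.2 ?_⟩,
      not_subset.2 ⟨f, ⟨hfJ, hfI⟩, fun h => h.2 (mem_insert f _)⟩⟩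
    exact mem_insert_of_mem _ ⟨hxI, fun hxg => hgJ (mem_singleton_iff.1 hxg ▸ hx.1)⟩
  obtain ⟨e, heJ, heI', hInd⟩ :=
    ih _ hlt (hI.indep_insert_sdiff_of_mem_support hC hCI hgC hgf) (hcard ▸ hIJ) rfl
  have heI : e ∉ I := fun heI =>
    heI' (mem_insert_of_mem _ ⟨heI, fun h => hgJ (mem_singleton_iff.1 h ▸ heJ)⟩)
  obtain ⟨D, hD, hDI⟩ := not_indep_iff.1 (hcon e heJ heI)
  have hgD : g ∈ support D := by
    by_contra hgD
    refine hInd D hD fun x hx => ?_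
    have hxg : x ≠ g := by rintro rfl; exact hgD hx
    have := hDI hx
    simp only [mem_insert_iff, mem_sdiff, mem_singleton_iff] at this ⊢
    tauto
  have hfD : f ∉ support D := fun hfD =>
    (hDI hfD).elim (fun h => heI' (h ▸ mem_insert f _)) hfI
  obtain ⟨Z, hZ, hZs⟩ := exists_circuit_subset_union_sdiff hC hD
    (fun h => hfD (h ▸ hI.mem_support_of_subset_insert hC hCI)) hgC hgD
  refine hInd Z hZ (hZs.trans fun x hx => ?_)
  have := union_subset_union hCI hDI hx.1
  simp only [mem_union, mem_insert_iff, mem_sdiff, mem_singleton_iff] at this hx ⊢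
  tauto

variable (M) in
def toMatroid : Matroid E :=
  (IndepMatroid.ofFinite finite_univ M.Indep indep_empty (fun _ _ hJ hIJ => hJ.subset hIJ)
    (fun _ _ hI hJ hIJ => hI.exists_insert_of_ncard_lt hJ hIJ) fun _ _ => subset_univ _).matroid

@[simp] lemma toMatroid_indep {I : Set E} : M.toMatroid.Indep I ↔ M.Indep I := Iff.rfl

lemma subset_toMatroid_ground (S : Set E) : S ⊆ M.toMatroid.E := subset_univ S

lemma isCircuit_toMatroid_iff {S : Set E} :
    M.toMatroid.IsCircuit S ↔ ∃ C ∈ M.circuits, support C = S := by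
  constructor
  · intro hS
    obtain ⟨C, hC, hCS⟩ := not_indep_iff.1 hS.not_indep
    exact ⟨C, hC, hS.eq_of_not_indep_subset (fun h => h C hC subset_rfl) hCS⟩
  · rintro ⟨C, hC, rfl⟩
    refine Matroid.isCircuit_iff_forall_ssubset.2
      ⟨⟨fun h => h C hC subset_rfl, subset_toMatroid_ground _⟩, fun I hI D hD hDI => ?_⟩
    have hDC := support_eq_of_subset hD hC (hDI.trans hI.subset)
    exact hI.ne (subset_antisymm hI.subset (hDC ▸ hDI))

variable (M) in
noncomputable def rk (S : Set E) : ℕ := (M.toMatroid.eRk S).toNat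

lemma cast_rk (S : Set E) : (M.rk S : ℕ∞) = M.toMatroid.eRk S :=
  ENat.natCast_toNat (Matroid.eRk_ne_top_iff.2 (M.toMatroid.isRkFinite_of_finite (toFinite S)))

lemma rk_mono {S T : Set E} (h : S ⊆ T) : M.rk S ≤ M.rk T := by
  have := M.toMatroid.eRk_mono h
  rwa [← cast_rk, ← cast_rk, Nat.cast_le] at this

lemma Indep.ncard_le_rk {I S : Set E} (hI : M.Indep I) (hIS : I ⊆ S) : I.ncard ≤ M.rk S := by
  have := (toMatroid_indep.2 hI).encard_le_eRk_of_subset hIS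
  rwa [← cast_rk, ← (toFinite I).cast_ncard_eq, Nat.cast_le] at this

lemma Indep.exists_superset_ncard_eq_rk {I S : Set E} (hI : M.Indep I) (hIS : I ⊆ S) :
    ∃ B, I ⊆ B ∧ B ⊆ S ∧ M.Indep B ∧ B.ncard = M.rk S := by
  obtain ⟨B, hB, hIB⟩ := (toMatroid_indep.2 hI).subset_isBasis_of_subset hIS
    (subset_toMatroid_ground S)
  refine ⟨B, hIB, hB.subset, hB.indep, ?_⟩
  have := hB.encard_eq_eRk
  rwa [← cast_rk, ← (toFinite B).cast_ncard_eq, Nat.cast_inj] at this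

lemma rk_lt_ncard_of_not_indep {S : Set E} (hS : ¬ M.Indep S) : M.rk S < S.ncard := by
  have := Matroid.eRk_lt_encard_of_dep_of_finite (toFinite S)
    ⟨fun h => hS (toMatroid_indep.1 h), subset_toMatroid_ground S⟩
  rwa [← cast_rk, ← (toFinite S).cast_ncard_eq, Nat.cast_lt] at this

lemma rk_sdiff_singleton_of_mem_support {C : SignVec E} (hC : C ∈ M.circuits) {S : Set E}
    (hCS : support C ⊆ S) {x : E} (hx : x ∈ support C) : M.rk (S \ {x}) = M.rk S := by
  have hcl : x ∈ M.toMatroid.closure (S \ {x}) :=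
    M.toMatroid.closure_subset_closure (sdiff_subset_sdiff_left hCS)
      ((isCircuit_toMatroid_iff.2 ⟨C, hC, rfl⟩).mem_closure_sdiff_singleton_of_mem hx)
  rw [← Nat.cast_inj (R := ℕ∞), cast_rk, cast_rk, ← Matroid.eRk_closure_eq,
    Matroid.closure_sdiff_singleton_eq_closure hcl, Matroid.eRk_closure_eq]

lemma rk_le_rank (S : Set E) : M.rk S ≤ M.rank := by
  obtain ⟨B, -, -, hB, hBS⟩ := indep_empty.exists_superset_ncard_eq_rk (empty_subset S)
  refine hBS ▸ le_csSup ⟨Fintype.card E, ?_⟩ ⟨B, hB, rfl⟩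
  rintro _ ⟨I, -, rfl⟩
  exact (ncard_le_ncard (subset_univ I)).trans_eq (by rw [ncard_univ, Nat.card_eq_fintype_card])

lemma support_eq_of_ncard_le_rk_add_two {G : Set E} (hG : G.ncard ≤ M.rk G + 2)
    {P C D : SignVec E} (hP : P ∈ M.circuits) (hC : C ∈ M.circuits) (hD : D ∈ M.circuits)
    (hPG : support P ⊆ G) {x : E} (hx : x ∈ support P) (hCG : support C ⊆ G \ {x})
    (hDG : support D ⊆ G \ {x}) : support C = support D := by
  by_contra hCD
  obtain ⟨y, hyC, hyD⟩ : ∃ y ∈ support C, y ∉ support D :=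
    not_subset.1 fun h => hCD (support_eq_of_subset hC hD h)
  have h1 := rk_sdiff_singleton_of_mem_support hP hPG hx
  have h2 := rk_sdiff_singleton_of_mem_support hC hCG hyC
  have h3 := rk_lt_ncard_of_not_indep (S := (G \ {x}) \ {y}) <| not_indep_iff.2
    ⟨D, hD, fun z hz => ⟨hDG hz, fun hzy => hyD (mem_singleton_iff.1 hzy ▸ hz)⟩⟩
  have h4 := ncard_sdiff_singleton_add_one (hPG hx)
  have h5 := ncard_sdiff_singleton_add_one (hCG hyC)
  omega

lemma exists_circuit_elim_of_ncard_le_rk_add_two {G : Set E} (hG : G.ncard ≤ M.rk G + 2)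
    {P Q : SignVec E} (hP : P ∈ M.circuits) (hQ : Q ∈ M.circuits) (hPG : support P ⊆ G)
    (hQG : support Q ⊆ G) (hPQ : support P ≠ support Q) {f p : E} (hPf : P f ≠ 0)
    (hQf : Q f = -P f) (hPp : P p ≠ 0) (hQp : Q p = P p) :
    ∃ Z ∈ M.circuits, Z f = 0 ∧ Z p ≠ 0 ∧ ∀ e, Z e ≠ 0 → Z e = P e ∨ Z e = Q e := by
  obtain ⟨Z, hZ, hZf, hZc⟩ :=
    exists_circuit_elim hP hQ (fun h => hPQ (by rw [h, support_neg])) hPf hQf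
  refine ⟨Z, hZ, hZf, fun hZp => ?_, hZc⟩
  -- Eliminating `p` between `P` and `-Q` gives a circuit `V` that, like `Z`, lies in `G \ {p}`,
  -- a set of nullity at most one; so `V = ±Z`, which the signs of `Z` outside `P` and `Q` rule out.
  obtain ⟨V, hV, hVp, hVc⟩ := exists_circuit_elim hP (M.neg_mem Q hQ)
    (fun h => hPQ (by rw [h, neg_neg])) hPp (by rw [Pi.neg_apply, hQp])
  have hVc' : ∀ e, V e ≠ 0 → V e = P e ∨ V e = -Q e := hVc
  have hG' : ∀ {Y : SignVec E}, support Y ⊆ support P ∪ support Q → Y p = 0 →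
      support Y ⊆ G \ {p} := fun hY hYp e he =>
    ⟨union_subset hPG hQG (hY he), fun hep => he (mem_singleton_iff.1 hep ▸ hYp)⟩
  have hZV : support Z = support V := support_eq_of_ncard_le_rk_add_two hG hP hZ hV hPG hPp
    (hG' (support_subset_union_of_conformal hZc) hZp)
    (hG' (by simpa using support_subset_union_of_conformal hVc) hVp)
  have hfZ : f ∉ support Z := fun h => h hZf
  obtain ⟨a, haZ, haQ⟩ : ∃ a ∈ support Z, a ∉ support Q := not_subset.1 fun h =>
    hfZ (support_eq_of_subset hZ hQ h ▸ (by rw [mem_support, hQf]; simpa using hPf))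
  obtain ⟨b, hbZ, hbP⟩ : ∃ b ∈ support Z, b ∉ support P := not_subset.1 fun h =>
    hfZ (support_eq_of_subset hZ hP h ▸ hPf)
  have haQ : Q a = 0 := of_not_not haQ
  have hbP : P b = 0 := of_not_not hbP
  have hZa : Z a = P a := (hZc a haZ).resolve_right fun h => haZ (h.trans haQ)
  have hZb : Z b = Q b := (hZc b hbZ).resolve_left fun h => hbZ (h.trans hbP)
  have haV : V a ≠ 0 := by rw [← mem_support, ← hZV]; exact haZ
  have hbV : V b ≠ 0 := by rw [← mem_support, ← hZV]; exact hbZ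
  have hVa : V a = P a := (hVc' a haV).resolve_right fun h => haV (by rw [h, haQ]; rfl)
  have hVb : V b = -Q b := (hVc' b hbV).resolve_left fun h => hbV (h.trans hbP)
  rcases M.support_incomparable Z hZ V hV hZV.subset with rfl | rfl
  · exact hbZ (SignType.eq_zero_of_eq_neg (hZb ▸ hVb))
  · have hPa : P a ≠ 0 := by rw [← hZa]; exact haZ
    rw [Pi.neg_apply, hVa] at hZa
    exact hPa (SignType.eq_zero_of_eq_neg hZa.symm)

lemma exists_circuit_agree_of_ncard_le_rk_add_two {T G : Set E} (hG : G.ncard ≤ M.rk G + 2)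
    {C : SignVec E} (hC : C ∈ M.circuits) (hCG : support C ⊆ G) (hGT : G \ T ⊆ support C)
    {σ : SignVec E} (hσ : σ ∈ M.circuits) (hσG : support σ ⊆ G) {m : E}
    (hm : m ∈ support C \ T) (hmσ : m ∉ support σ) {p : E} (hp : p ∈ support σ \ T)
    (hσp : σ p = C p) :
    ∃ D ∈ M.circuits, (support D \ T).Nonempty ∧ support D \ T ⊂ support C \ T ∧
      ∀ e ∈ support D \ T, D e = C e := by
  -- Eliminating with `C` at a disagreement `f` keeps `p`, drops `f` (the new `m`), and creates no
  -- new disagreement, so we induct on the number of disagreements outside `T`.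
  obtain ⟨n, hn⟩ : ∃ n, {e | e ∈ support σ \ T ∧ σ e ≠ C e}.ncard = n := ⟨_, rfl⟩
  induction n using Nat.strong_induction_on generalizing σ m p with
  | _ n ih =>
  by_cases hagree : ∀ e ∈ support σ \ T, σ e = C e
  · exact ⟨σ, hσ, ⟨p, hp⟩, ⟨fun e he => ⟨hGT ⟨hσG he.1, he.2⟩, he.2⟩, fun h => hmσ (h hm).1⟩,
      hagree⟩
  obtain ⟨f, hf, hσf⟩ := not_forall₂.1 hagree
  have hCf : f ∈ support C := hGT ⟨hσG hf.1, hf.2⟩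
  obtain ⟨Z, hZ, hZf, hZp, hZc⟩ := exists_circuit_elim_of_ncard_le_rk_add_two hG hσ hC hσG hCG
    (fun h => hmσ (h ▸ hm.1)) hf.1 (SignType.eq_neg_of_ne hf.1 hCf hσf) hp.1 hσp.symm
  have hZσ : ∀ e, Z e ≠ 0 → Z e ≠ C e → Z e = σ e := fun e he hne => (hZc e he).resolve_right hne
  refine ih _ (hn ▸ ncard_lt_ncard ⟨fun e he => ?_, fun h => ?_⟩) hZ
    ((support_subset_union_of_conformal hZc).trans (union_subset hσG hCG)) ⟨hCf, hf.2⟩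
    (fun h => h hZf) ⟨hZp, hp.2⟩ ((hZc p hZp).elim (·.trans hσp) id) rfl
  · have := hZσ e he.1.1 he.2
    exact ⟨⟨by rw [mem_support, ← this]; exact he.1.1, he.1.2⟩, by rw [← this]; exact he.2⟩
  · exact (h ⟨hf, hσf⟩).1.1 hZf

lemma exists_circuit_of_rk_jump {T : Set E} {C : SignVec E} (hC : C ∈ M.circuits)
    (hjump : M.rk (T ∪ support C) + 2 ≤ M.rk T + (support C \ T).ncard) {k : E}
    (hk : k ∈ support C \ T) :
    ∃ B : Set E, M.Indep B ∧ support C \ {k} ⊆ B ∧ B ⊆ T ∪ (support C \ {k}) ∧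
      ∃ w ∈ T, ∃ κ ∈ M.circuits, support κ ⊆ insert w B ∧ (support κ \ T).Nonempty := by
  have hCk := indep_support_sdiff_singleton hC k hk.1
  obtain ⟨B, hCB, hBS, hB, hBcard⟩ :=
    hCk.exists_superset_ncard_eq_rk (subset_union_right : support C \ {k} ⊆ T ∪ (support C \ {k}))
  obtain ⟨BT, -, hBT, hBTind, hBTcard⟩ :=
    (indep_empty (M := M)).exists_superset_ncard_eq_rk (empty_subset T)
  -- `B` has `|support C \ T| - 1` elements outside `T`, too many to leave room for a basis of `T`
  have hlt : (B ∩ T).ncard < BT.ncard := by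
    have h1 := ncard_inter_add_ncard_sdiff_eq_ncard B T
    have h2 := ncard_le_ncard (s := (support C \ T) \ {k}) (t := B \ T)
      fun x hx => ⟨hCB ⟨hx.1.1, hx.2⟩, hx.1.2⟩
    have h3 := ncard_sdiff_singleton_add_one hk
    have h4 := rk_mono (M := M) (union_subset_union_right T sdiff_subset :
      T ∪ (support C \ {k}) ⊆ T ∪ support C)
    omega
  obtain ⟨w, hwBT, hwBT', hwind⟩ :=
    (hB.subset inter_subset_left).exists_insert_of_ncard_lt hBTind hlt
  have hwT : w ∈ T := hBT hwBT
  have hwB : w ∉ B := fun h => hwBT' ⟨h, hwT⟩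
  obtain ⟨κ, hκ, hκB⟩ := (not_indep_iff (M := M)).1 fun hind => by
    have := hind.ncard_le_rk (insert_subset (Or.inl hwT) hBS)
    rw [ncard_insert_of_notMem hwB] at this
    omega
  refine ⟨B, hB, hCB, hBS, w, hwT, κ, hκ, hκB,
    sdiff_nonempty.2 fun hκT => hwind κ hκ fun x hx => ?_⟩
  rcases hκB hx with rfl | hxB
  · exact mem_insert _ _
  · exact mem_insert_of_mem _ ⟨hxB, hκT hx⟩

lemma exists_ncard_le_rk_add_two_of_rk_jump {T : Set E} {C : SignVec E} (hC : C ∈ M.circuits)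
    (hjump : M.rk (T ∪ support C) + 2 ≤ M.rk T + (support C \ T).ncard) :
    ∃ G : Set E, G.ncard ≤ M.rk G + 2 ∧ support C ⊆ G ∧ G \ T ⊆ support C ∧
      ∃ κ ∈ M.circuits, support κ ⊆ G ∧ (support κ \ T).Nonempty ∧
        ∃ m ∈ support C \ T, m ∉ support κ := by
  obtain ⟨k, hkC, hkT⟩ : ∃ k ∈ support C, k ∉ T := not_subset.1 fun hCT => by
    have := rk_mono (M := M) (subset_union_left : T ⊆ T ∪ support C)
    rw [sdiff_eq_empty.2 hCT, ncard_empty] at hjump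
    omega
  obtain ⟨B, hB, hCB, hBS, w, hwT, κ, hκ, hκB, hκT⟩ := exists_circuit_of_rk_jump hC hjump ⟨hkC, hkT⟩
  have hkB : k ∉ B := fun h => (hBS h).elim hkT fun h' => h'.2 rfl
  refine ⟨insert k (insert w B), ?_, fun x hx => ?_, fun x hx => ?_, κ, hκ,
    hκB.trans (subset_insert _ _), hκT, k, ⟨hkC, hkT⟩,
    fun hkκ => (hκB hkκ).elim (fun h => hkT (h ▸ hwT)) hkB⟩
  · have h1 := ncard_insert_le k (insert w B)
    have h2 := ncard_insert_le w B
    have h3 := hB.ncard_le_rk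
      ((subset_insert w B).trans (subset_insert k _) : B ⊆ insert k (insert w B))
    omega
  · by_cases hxk : x = k
    · exact hxk ▸ mem_insert _ _
    · exact mem_insert_of_mem _ (mem_insert_of_mem _ (hCB ⟨hx, hxk⟩))
  · obtain ⟨hx, hxT⟩ := hx
    rcases hx with rfl | rfl | hxB
    · exact hkC
    · exact absurd hwT hxT
    · exact ((hBS hxB).resolve_left hxT).1

lemma exists_circuit_refining {T : Set E} {C : SignVec E} (hC : C ∈ M.circuits)
    (hjump : M.rk (T ∪ support C) + 2 ≤ M.rk T + (support C \ T).ncard) :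
    ∃ D ∈ M.circuits, (support D \ T).Nonempty ∧ support D \ T ⊂ support C \ T ∧
      ∀ e ∈ support D \ T, D e = C e := by
  obtain ⟨G, hG, hCG, hGT, κ, hκ, hκG, ⟨p, hp⟩, m, hm, hmκ⟩ :=
    exists_ncard_le_rk_add_two_of_rk_jump hC hjump
  obtain ⟨σ, hσ, hσκ, hσp⟩ := exists_circuit_eq_sign hκ hp.1 (hGT ⟨hκG hp.1, hp.2⟩)
  rw [← hσκ] at hκG hmκ hp
  exact exists_circuit_agree_of_ncard_le_rk_add_two hG hC hCG hGT hσ hκG hm hmκ hp hσp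

lemma isVector_zero : M.IsVector 0 := ⟨[], by simp, rfl⟩

lemma IsVector.comp_circuit {X C : SignVec E} (hX : M.IsVector X) (hC : C ∈ M.circuits) :
    M.IsVector (comp X C) := by
  obtain ⟨l, hl, rfl⟩ := hX
  refine ⟨l ++ [C], fun D hD => ?_, ?_⟩
  · rcases List.mem_append.1 hD with hD | hD
    · exact hl D hD
    · exact List.mem_singleton.1 hD ▸ hC
  · simp only [List.foldr_append, List.foldr_cons, List.foldr_nil, comp_zero]
    exact (foldr_comp l C).symm

lemma IsVector.induction {P : SignVec E → Prop} (zero : P 0)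
    (comp_circuit : ∀ X C, M.IsVector X → C ∈ M.circuits → P X → P (comp X C))
    {X : SignVec E} (hX : M.IsVector X) : P X := by
  obtain ⟨l, hl, rfl⟩ := hX
  induction l using List.reverseRecOn with
  | nil => exact zero
  | append_singleton l C ih =>
    have hl' : ∀ D ∈ l, D ∈ M.circuits := fun D hD => hl D (List.mem_append_left _ hD)
    simp only [List.foldr_append, List.foldr_cons, List.foldr_nil, comp_zero]
    rw [foldr_comp]
    exact comp_circuit _ C ⟨l, hl', rfl⟩ (hl C (by simp)) (ih hl')

variable (M) in
def HasVectorChain (X : SignVec E) (h : ℕ) : Prop :=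
  ∃ c : Fin (h+1) → SignVec E, (∀ i, M.IsVector (c i)) ∧ c 0 = 0 ∧
    c (Fin.last h) = X ∧ ∀ i j : Fin (h+1), i < j → SignVec.lt (c i) (c j)

lemma hasVectorChain_zero : M.HasVectorChain 0 0 :=
  ⟨fun _ => 0, fun _ => isVector_zero, rfl, rfl,
    fun i j hij => absurd hij (Fin.subsingleton_one.elim i j ▸ lt_irrefl i)⟩

lemma HasVectorChain.snoc {X Y : SignVec E} {h : ℕ} (hc : M.HasVectorChain X h)
    (hY : M.IsVector Y) (hXY : lt X Y) : M.HasVectorChain Y (h + 1) := by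
  obtain ⟨c, hvec, hzero, hlast, hchain⟩ := hc
  have hle : ∀ i, le (c i) X := fun i => by
    rcases (Fin.le_last i).lt_or_eq with hi | rfl
    · exact hlast ▸ (hchain i _ hi).1
    · exact hlast ▸ fun _ _ => rfl
  refine ⟨Fin.snoc (α := fun _ => SignVec E) c Y, fun i => ?_, ?_, by simp, fun i j hij => ?_⟩
  · induction i using Fin.lastCases <;> simp [hvec, hY]
  · simpa using hzero
  · induction j using Fin.lastCases with
    | last =>
      induction i using Fin.lastCases with
      | last => exact absurd hij (lt_irrefl _)
      | cast i => simpa using lt_of_le_of_lt (hle i) hXY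
    | cast j =>
      induction i using Fin.lastCases with
      | last => exact absurd hij (not_lt.2 (Fin.le_last _))
      | cast i => simpa using hchain i j (by simpa using hij)

lemma HasVectorChain.le_card {X : SignVec E} {h : ℕ} (hc : M.HasVectorChain X h) :
    h ≤ Fintype.card E := by
  obtain ⟨c, -, -, -, hchain⟩ := hc
  have hmono : StrictMono fun i => (support (c i)).ncard := fun i j hij =>
    ncard_lt_ncard (support_ssubset_of_lt (hchain i j hij))
  have hbound : ∀ i, (support (c i)).ncard < Fintype.card E + 1 := fun i =>
    Nat.lt_succ_of_le ((ncard_le_ncard (subset_univ _)).trans_eq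
      (by rw [ncard_univ, Nat.card_eq_fintype_card]))
  simpa using Fintype.card_le_of_injective (fun i => (⟨_, hbound i⟩ : Fin (Fintype.card E + 1)))
    fun i j hij => hmono.injective (Fin.mk.inj_iff.1 hij)

lemma IsVector.hasVectorChain_height {X : SignVec E} (hX : M.IsVector X) :
    M.HasVectorChain X (M.height X) := by
  refine Nat.sSup_mem ?_ ⟨_, fun _ hc => HasVectorChain.le_card hc⟩
  by_cases h0 : X = 0
  · subst h0
    exact ⟨0, hasVectorChain_zero⟩
  · exact ⟨1, hasVectorChain_zero.snoc hX ⟨fun _ h => absurd rfl h, Ne.symm h0⟩⟩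

lemma height_succ_le {X Y : SignVec E} (hX : M.IsVector X) (hY : M.IsVector Y) (hXY : lt X Y) :
    M.height X + 1 ≤ M.height Y :=
  le_csSup ⟨_, fun _ hc => HasVectorChain.le_card hc⟩ (hX.hasVectorChain_height.snoc hY hXY)

lemma ncard_support_comp_le_rk_add_height {X : SignVec E} (hX : M.IsVector X)
    (hXh : (support X).ncard ≤ M.rk (support X) + M.height X) {C : SignVec E}
    (hC : C ∈ M.circuits) :
    (support (comp X C)).ncard ≤ M.rk (support (comp X C)) + M.height (comp X C) := by
  obtain ⟨n, hn⟩ : ∃ n, (support C \ support X).ncard = n := ⟨_, rfl⟩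
  induction n using Nat.strong_induction_on generalizing X C with
  | _ n ih =>
  by_cases hjump :
      M.rk (support X ∪ support C) + 2 ≤ M.rk (support X) + (support C \ support X).ncard
  · obtain ⟨D, hD, ⟨d, hd⟩, hDC, hagree⟩ := exists_circuit_refining hC hjump
    have hXD := ih _ (hn ▸ ncard_lt_ncard hDC) hX hXh hD rfl
    have hlt : support C \ support (comp X D) ⊂ support C \ support X := by
      rw [support_comp]
      exact ⟨sdiff_subset_sdiff_right subset_union_left,
        fun h => (h (hDC.subset hd)).2 (Or.inr hd.1)⟩
    rw [← comp_comp_eq_of_agree hagree]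
    exact ih _ (hn ▸ ncard_lt_ncard hlt) (hX.comp_circuit hD) hXD hC rfl
  · by_cases hCX : support C ⊆ support X
    · rwa [comp_eq_self_of_support_subset hCX]
    · have hheight := height_succ_le hX (hX.comp_circuit hC) (lt_comp_of_not_subset hCX)
      have hcard := ncard_union_eq (disjoint_sdiff_right (s := support X) (t := support C))
      rw [union_sdiff_self] at hcard
      rw [support_comp]
      omega

lemma ncard_support_le_rk_add_height {X : SignVec E} (hX : M.IsVector X) :
    (support X).ncard ≤ M.rk (support X) + M.height X :=
  IsVector.induction (by simp [support])
    (fun _ _ hX hC hXh => ncard_support_comp_le_rk_add_height hX hXh hC) hX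

end OrientedMatroid

/-- For every vector `X` of an oriented matroid `M`,
`|supp(X)| ≤ rk(M) + height(X)`. -/
theorem support_card_le_rank_add_height {E : Type*} [Fintype E] [DecidableEq E]
    (M : OrientedMatroid E) (X : SignVec E) (hX : M.IsVector X) :
    (SignVec.support X).ncard ≤ M.rank + M.height X :=
  (OrientedMatroid.ncard_support_le_rk_add_height hX).trans
    (Nat.add_le_add_right (OrientedMatroid.rk_le_rank _) _)
end

section
/- Let k be a positive integer and {K^I}_{I ⊆ [k]} a family of simplicial complexes with K^I a subcomplex of K^J whenever I ⊆ J. Suppose K^I is homologically (|I|-2)-connected (with Z/2 coefficients) for every I. Let λ be a labeling of the vertices of K^{[k]} by elements of [k] such that λ(v) ∈ I whenever v is a vertex of K^I. Then K^{[k]} contains a (k-1)-dimensional simplex whose k vertices receive k distinct labels under λ. -/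
/-!
Build, by induction on `|I|`, chains `c I` of `(|I|-1)`-faces of `K^I` with `c ∅ = [∅]` and
`∂ (c I) = ∑_{i ∈ I} c (I \ i)`: the right-hand side is a `(|I|-2)`-cycle of `K^I`, which bounds
by connectivity. The labelling induces a chain map to the full simplex on `[k]`, sending a face
to its image if its labels are distinct and to `0` otherwise. Since faces of `K^I` carry labels in
`I`, this map sends `c I` to a multiple of the face `I`, and comparing boundaries by induction
shows the multiple is `1`. So `c [k]` contains a face with `k` distinct labels.
-/

/-- An (abstract) simplicial complex on vertex set `V`, given as its set of faces:
downward closed and containing the empty face. -/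
def IsComplex {V : Type*} (K : Set (Finset V)) : Prop :=
  ∅ ∈ K ∧ ∀ s ∈ K, ∀ t ⊆ s, t ∈ K

/-- The simplicial boundary operator over `ℤ/2`, on the augmented chain complex: a chain is a
finitely supported function on faces (a face of cardinality `d` has degree `d - 1`; the empty
face spans the degree `-1` part, so that `bd` in degree `0` is the augmentation map). -/
noncomputable def bd {V : Type*} [DecidableEq V] (c : Finset V →₀ ZMod 2) :
    Finset V →₀ ZMod 2 :=
  c.sum fun s a => a • ∑ v ∈ s, Finsupp.single (s.erase v) (1 : ZMod 2)

/-- `c` is a chain of the complex `K` supported on faces of cardinality `d`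
(i.e. a simplicial `(d-1)`-chain of `K` over `ℤ/2`). -/
def IsChainOn {V : Type*} (K : Set (Finset V)) (d : ℕ) (c : Finset V →₀ ZMod 2) : Prop :=
  ∀ s ∈ c.support, s ∈ K ∧ s.card = d

/-- `K` is homologically `m`-connected over `ℤ/2`: its reduced homology vanishes in all
degrees `≤ m` (degree `d - 1` corresponds to faces of cardinality `d`); `(-1)`-connected
means non-empty, and `m ≤ -2` demands nothing. -/
def HomConnected {V : Type*} [DecidableEq V] (K : Set (Finset V)) (m : ℤ) : Prop :=
  ∀ d : ℕ, (d : ℤ) ≤ m + 1 → ∀ c, IsChainOn K d c → bd c = 0 →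
    ∃ b, IsChainOn K (d + 1) b ∧ bd b = c

open scoped Finset

section Boundary

variable {V : Type*} [DecidableEq V]

lemma bd_single (s : Finset V) (a : ZMod 2) :
    bd (Finsupp.single s a) = a • ∑ v ∈ s, Finsupp.single (s.erase v) (1 : ZMod 2) :=
  Finsupp.sum_single_index (zero_smul _ _)

@[simp]
lemma bd_zero : bd (0 : Finset V →₀ ZMod 2) = 0 :=
  Finsupp.sum_zero_index

variable (V) in
noncomputable def bdLinear : (Finset V →₀ ZMod 2) →ₗ[ZMod 2] (Finset V →₀ ZMod 2) :=
  Finsupp.lsum (ZMod 2) fun s =>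
    LinearMap.toSpanSingleton (ZMod 2) _ (∑ v ∈ s, Finsupp.single (s.erase v) (1 : ZMod 2))

@[simp]
lemma coe_bdLinear : ⇑(bdLinear V) = bd := rfl

lemma bd_single_one_ne_zero {s : Finset V} (hs : s.Nonempty) :
    bd (Finsupp.single s 1) ≠ 0 := by
  obtain ⟨v, hv⟩ := hs
  refine Finsupp.ne_iff.2 ⟨s.erase v, ?_⟩
  rw [bd_single, one_smul, Finsupp.finsetSum_apply, Finset.sum_eq_single_of_mem v hv]
  · simp
  · intro w hw hwv
    rw [Finsupp.single_apply, if_neg fun h => hwv ((s.erase_inj hw).1 h)]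

end Boundary

lemma add_self_eq_zero_of_zmod_two {M : Type*} [AddCommGroup M] [Module (ZMod 2) M] (x : M) :
    x + x = 0 := by
  rw [← two_smul (ZMod 2), show (2 : ZMod 2) = 0 from rfl, zero_smul]

lemma even_nsmul_eq_zero_of_zmod_two {M : Type*} [AddCommGroup M] [Module (ZMod 2) M] {n : ℕ}
    (hn : Even n) (x : M) : n • x = 0 := by
  obtain ⟨m, rfl⟩ := hn
  rw [add_nsmul, add_self_eq_zero_of_zmod_two]

lemma sum_sum_erase_erase_eq_zero {ι M : Type*} [DecidableEq ι] [AddCommGroup M]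
    [Module (ZMod 2) M] (f : Finset ι → M) (I : Finset ι) :
    ∑ i ∈ I, ∑ j ∈ I.erase i, f ((I.erase i).erase j) = 0 := by
  rw [Finset.sum_sigma']
  refine Finset.sum_involution (fun p _ => ⟨p.2, p.1⟩) (fun p _ => ?_) (fun p hp _ h => ?_)
    (fun p hp => ?_) (fun _ _ => rfl)
  · rw [Finset.erase_right_comm (a := p.1)]
    exact add_self_eq_zero_of_zmod_two _
  · exact (Finset.mem_erase.1 (Finset.mem_sigma.1 hp).2).1 (congrArg Sigma.fst h)
  · simp only [Finset.mem_sigma, Finset.mem_erase] at hp ⊢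
    exact ⟨hp.2.2, Ne.symm hp.2.1, hp.1⟩

section Labels

variable {V ι : Type*} {lam : V → ι} {s : Finset V}

lemma injOn_erase_iff [DecidableEq V] {v : V} :
    Set.InjOn lam ↑(s.erase v) ↔ ∀ x ∈ s, ∀ y ∈ s, x ≠ y → lam x = lam y → x = v ∨ y = v := by
  simp only [Set.InjOn, Finset.coe_erase, Set.mem_sdiff, Finset.mem_coe, Set.mem_singleton_iff]
  grind

lemma exists_ne_of_not_injOn (h : ¬ Set.InjOn lam ↑s) :
    ∃ x ∈ s, ∃ y ∈ s, x ≠ y ∧ lam x = lam y := by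
  simp only [Set.InjOn, Finset.mem_coe, not_forall] at h
  obtain ⟨x, hx, y, hy, hxy, hne⟩ := h
  exact ⟨x, hx, y, hy, hne, hxy⟩

open Classical in
lemma even_card_filter_injOn_erase [DecidableEq V] (h : ¬ Set.InjOn lam ↑s) :
    Even #{v ∈ s | Set.InjOn lam ↑(s.erase v)} := by
  obtain ⟨x, hx, y, hy, hxy, hl⟩ := exists_ne_of_not_injOn h
  have hsub : {v ∈ s | Set.InjOn lam ↑(s.erase v)} ⊆ {x, y} := fun v hv => by
    have := injOn_erase_iff.1 (Finset.mem_filter.1 hv).2 x hx y hy hxy hl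
    grind
  have hiff : Set.InjOn lam ↑(s.erase x) ↔ Set.InjOn lam ↑(s.erase y) := by
    simp only [injOn_erase_iff]
    grind
  by_cases hinj : Set.InjOn lam ↑(s.erase x)
  · have : {v ∈ s | Set.InjOn lam ↑(s.erase v)} = {x, y} := by
      refine hsub.antisymm ?_
      grind
    rw [this, Finset.card_pair hxy]
    exact even_two
  · have : {v ∈ s | Set.InjOn lam ↑(s.erase v)} = ∅ := by
      refine Finset.subset_empty.1 fun v hv => ?_
      grind
    rw [this, Finset.card_empty]
    exact Even.zero

variable [DecidableEq V] [DecidableEq ι]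

lemma image_erase_of_injOn (h : Set.InjOn lam ↑s) {v : V} (hv : v ∈ s) :
    (s.erase v).image lam = (s.image lam).erase (lam v) := by
  ext j
  simp only [Finset.mem_image, Finset.mem_erase]
  constructor
  · rintro ⟨x, ⟨hxv, hxs⟩, rfl⟩
    exact ⟨fun he => hxv (h hxs hv he), x, hxs, rfl⟩
  · rintro ⟨hj, x, hx, rfl⟩
    exact ⟨x, ⟨fun he => hj (by rw [he]), hx⟩, rfl⟩

lemma image_erase_of_not_injOn (h : ¬ Set.InjOn lam ↑s) {v : V} (hv : v ∈ s)
    (hv' : Set.InjOn lam ↑(s.erase v)) : (s.erase v).image lam = s.image lam := by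
  obtain ⟨x, hx, y, hy, hxy, hl⟩ := exists_ne_of_not_injOn h
  have hlv : lam v ∈ (s.erase v).image lam := by
    rcases injOn_erase_iff.1 hv' x hx y hy hxy hl with rfl | rfl
    · exact Finset.mem_image.2 ⟨y, Finset.mem_erase.2 ⟨hxy.symm, hy⟩, hl.symm⟩
    · exact Finset.mem_image.2 ⟨x, Finset.mem_erase.2 ⟨hxy, hx⟩, hl⟩
  conv_rhs => rw [← Finset.insert_erase hv, Finset.image_insert, Finset.insert_eq_of_mem hlv]

end Labels

section LabelMap

variable {V ι : Type*} [DecidableEq V] [DecidableEq ι] (lam : V → ι)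

open Classical in
noncomputable def labelMap : (Finset V →₀ ZMod 2) →ₗ[ZMod 2] (Finset ι →₀ ZMod 2) :=
  Finsupp.lsum (ZMod 2) fun s =>
    if Set.InjOn lam ↑s then Finsupp.lsingle (s.image lam) else 0

omit [DecidableEq V] in
open Classical in
lemma labelMap_single (s : Finset V) (a : ZMod 2) :
    labelMap lam (Finsupp.single s a) =
      if Set.InjOn lam ↑s then Finsupp.single (s.image lam) a else 0 := by
  rw [labelMap, Finsupp.lsum_single]
  split_ifs <;> rfl

open Classical in
lemma labelMap_bd_single_one (s : Finset V) :
    labelMap lam (bd (Finsupp.single s 1)) = bd (labelMap lam (Finsupp.single s 1)) := by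
  simp only [bd_single, one_smul, map_sum, labelMap_single]
  by_cases h : Set.InjOn lam ↑s
  · rw [if_pos h, bd_single, one_smul, Finset.sum_image fun x hx y hy => h hx hy]
    refine Finset.sum_congr rfl fun v hv => ?_
    rw [if_pos (h.mono (Finset.coe_subset.2 (s.erase_subset v))), image_erase_of_injOn h hv]
  · rw [if_neg h, ← Finset.sum_filter,
      Finset.sum_congr rfl fun v hv => by
        rw [image_erase_of_not_injOn h (Finset.mem_filter.1 hv).1 (Finset.mem_filter.1 hv).2],
      Finset.sum_const, bd_zero]
    exact even_nsmul_eq_zero_of_zmod_two (by convert even_card_filter_injOn_erase h) _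

lemma labelMap_bd (c : Finset V →₀ ZMod 2) : labelMap lam (bd c) = bd (labelMap lam c) := by
  rw [← coe_bdLinear, ← coe_bdLinear, ← LinearMap.comp_apply, ← LinearMap.comp_apply]
  congr 1
  refine Finsupp.lhom_ext fun s a => ?_
  rw [← Finsupp.smul_single_one s a]
  simp only [map_smul, LinearMap.comp_apply, coe_bdLinear, labelMap_bd_single_one]

end LabelMap

section LabelMapApply

variable {V ι : Type*} [DecidableEq ι] {lam : V → ι}

lemma exists_injOn_of_labelMap_apply_ne_zero {c : Finset V →₀ ZMod 2} {t : Finset ι}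
    (h : labelMap lam c t ≠ 0) : ∃ s ∈ c.support, Set.InjOn lam ↑s ∧ s.image lam = t := by
  classical
  rw [labelMap, Finsupp.lsum_apply, Finsupp.sum_apply] at h
  obtain ⟨s, hs, hne⟩ := Finset.exists_ne_zero_of_sum_ne_zero h
  by_cases hinj : Set.InjOn lam ↑s
  · refine ⟨s, hs, hinj, by_contra fun hst => hne ?_⟩
    simp [hinj, hst]
  · simp [hinj] at hne

lemma labelMap_eq_single {c : Finset V →₀ ZMod 2} {I : Finset ι}
    (h : ∀ s ∈ c.support, Set.InjOn lam ↑s → s.image lam = I) :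
    labelMap lam c = Finsupp.single I (labelMap lam c I) := by
  ext t
  rw [Finsupp.single_apply]
  split_ifs with hIt
  · rw [hIt]
  · by_contra hne
    obtain ⟨s, hs, hinj, rfl⟩ := exists_injOn_of_labelMap_apply_ne_zero hne
    exact hIt (h s hs hinj).symm

end LabelMapApply

section Chains

variable {V : Type*} {K L : Set (Finset V)} {d : ℕ}

lemma IsChainOn.mono {c : Finset V →₀ ZMod 2} (hc : IsChainOn K d c) (h : K ⊆ L) :
    IsChainOn L d c :=
  fun s hs => ⟨h (hc s hs).1, (hc s hs).2⟩

lemma IsChainOn.finsetSum [DecidableEq V] {α : Type*} {I : Finset α}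
    {c : α → Finset V →₀ ZMod 2} (hc : ∀ i ∈ I, IsChainOn K d (c i)) :
    IsChainOn K d (∑ i ∈ I, c i) := fun s hs => by
  obtain ⟨i, hi, hs⟩ := Finset.mem_biUnion.1 (Finsupp.support_finsetSum hs)
  exact hc i hi s hs

lemma bd_finsetSum [DecidableEq V] {α : Type*} (I : Finset α) (c : α → Finset V →₀ ZMod 2) :
    bd (∑ i ∈ I, c i) = ∑ i ∈ I, bd (c i) := by
  simp only [← coe_bdLinear, map_sum]

end Chains

section FillingFamily

variable {V ι : Type*} [DecidableEq V] [DecidableEq ι] {K : Finset ι → Set (Finset V)}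

/-- `c I` plays the role of the image of the face `I` of the full simplex on `ι` under an
augmented chain map into the complexes `K I`. -/
def IsFillingFamily (K : Finset ι → Set (Finset V)) (n : ℕ)
    (c : Finset ι → Finset V →₀ ZMod 2) : Prop :=
  c ∅ = Finsupp.single ∅ 1 ∧
    ∀ I : Finset ι, #I ≤ n → IsChainOn (K I) #I (c I) ∧ bd (c I) = ∑ i ∈ I, c (I.erase i)

lemma IsFillingFamily.exists_filler {n : ℕ} {c : Finset ι → Finset V →₀ ZMod 2}
    (hc : IsFillingFamily K n c) (hmono : ∀ I J, I ⊆ J → K I ⊆ K J) {I : Finset ι}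
    (hconn : HomConnected (K I) ((#I : ℤ) - 2)) (hI : #I = n + 1) :
    ∃ b, IsChainOn (K I) (n + 1) b ∧ bd b = ∑ i ∈ I, c (I.erase i) := by
  have hcard : ∀ i ∈ I, #(I.erase i) = n := fun i hi => by
    rw [Finset.card_erase_of_mem hi, hI, Nat.add_sub_cancel]
  have hchain : IsChainOn (K I) n (∑ i ∈ I, c (I.erase i)) :=
    IsChainOn.finsetSum fun i hi => hcard i hi ▸
      ((hc.2 _ (hcard i hi).le).1.mono (hmono _ _ (I.erase_subset i)))
  have hcycle : bd (∑ i ∈ I, c (I.erase i)) = 0 := by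
    rw [bd_finsetSum, Finset.sum_congr rfl fun i hi => (hc.2 _ (hcard i hi).le).2]
    exact sum_sum_erase_erase_eq_zero c I
  exact hconn n (by rw [hI]; push_cast; omega) _ hchain hcycle

lemma exists_isFillingFamily (hempty : ∅ ∈ K ∅) (hmono : ∀ I J, I ⊆ J → K I ⊆ K J)
    (hconn : ∀ I, HomConnected (K I) ((#I : ℤ) - 2)) (n : ℕ) :
    ∃ c, IsFillingFamily K n c := by
  induction n with
  | zero =>
    refine ⟨fun _ => Finsupp.single ∅ 1, rfl, fun I hI => ?_⟩
    obtain rfl : I = ∅ := Finset.card_eq_zero.1 (Nat.le_zero.1 hI)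
    refine ⟨fun s hs => ?_, by simp [bd_single]⟩
    obtain rfl := Finset.mem_singleton.1 (Finsupp.support_single_subset hs)
    exact ⟨hempty, Finset.card_empty⟩
  | succ n ih =>
    obtain ⟨c, hc⟩ := ih
    choose! b hb using fun I (hI : #I = n + 1) => hc.exists_filler hmono (hconn I) hI
    refine ⟨fun I => if #I ≤ n then c I else b I, by simp [hc.1], fun I hI => ?_⟩
    have hfaces : ∑ i ∈ I, (if #(I.erase i) ≤ n then c (I.erase i) else b (I.erase i)) =
        ∑ i ∈ I, c (I.erase i) :=
      Finset.sum_congr rfl fun i hi => if_pos (by rw [Finset.card_erase_of_mem hi]; omega)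
    simp only [hfaces]
    split_ifs with hIn
    · exact hc.2 I hIn
    · have hI' : #I = n + 1 := by omega
      exact hI' ▸ hb I hI'

end FillingFamily

lemma image_subset_of_mem {V ι : Type*} [DecidableEq ι] {K : Set (Finset V)} {lam : V → ι}
    {I : Finset ι} (hK : IsComplex K) (hlab : ∀ v, {v} ∈ K → lam v ∈ I) {s : Finset V}
    (hs : s ∈ K) : s.image lam ⊆ I := by
  intro j hj
  obtain ⟨v, hv, rfl⟩ := Finset.mem_image.1 hj
  exact hlab v (hK.2 s hs {v} (Finset.singleton_subset_iff.2 hv))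

lemma IsFillingFamily.labelMap_eq {V ι : Type*} [DecidableEq V] [DecidableEq ι]
    {K : Finset ι → Set (Finset V)} {lam : V → ι} {n : ℕ} {c : Finset ι → Finset V →₀ ZMod 2}
    (hc : IsFillingFamily K n c) (himage : ∀ I, ∀ s ∈ K I, s.image lam ⊆ I) :
    ∀ I : Finset ι, #I ≤ n → labelMap lam (c I) = Finsupp.single I 1 := by
  intro I
  induction I using Finset.strongInduction with
  | H I ih =>
  intro hIn
  rcases I.eq_empty_or_nonempty with rfl | hI
  · simp [hc.1, labelMap_single]
  obtain ⟨hchain, hbd⟩ := hc.2 I hIn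
  have hrainbow : ∀ s ∈ (c I).support, Set.InjOn lam ↑s → s.image lam = I := fun s hs hinj =>
    Finset.eq_of_subset_of_card_le (himage I s (hchain s hs).1)
      (by rw [Finset.card_image_of_injOn hinj, (hchain s hs).2])
  set a := labelMap lam (c I) I
  have hsingle : labelMap lam (c I) = Finsupp.single I a := labelMap_eq_single hrainbow
  have hfaces : ∀ i ∈ I, labelMap lam (c (I.erase i)) = Finsupp.single (I.erase i) 1 :=
    fun i hi => ih _ (Finset.erase_ssubset hi) ((Finset.card_le_card (I.erase_subset i)).trans hIn)
  have hbd_eq : a • bd (Finsupp.single I 1) = bd (Finsupp.single I 1) := calc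
    a • bd (Finsupp.single I 1) = bd (labelMap lam (c I)) := by
      rw [hsingle, bd_single, bd_single, one_smul]
    _ = labelMap lam (bd (c I)) := (labelMap_bd lam _).symm
    _ = bd (Finsupp.single I 1) := by
      rw [hbd, map_sum, Finset.sum_congr rfl hfaces, bd_single, one_smul]
  rcases (by decide : ∀ x : ZMod 2, x = 0 ∨ x = 1) a with ha | ha
  · rw [ha, zero_smul] at hbd_eq
    exact absurd hbd_eq.symm (bd_single_one_ne_zero hI)
  · rw [hsingle, ha]

theorem sperner_meshulam_general {V : Type*} [DecidableEq V] (k : ℕ)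
    (K : Finset (Fin k) → Set (Finset V))
    (hcx : ∀ I, IsComplex (K I))
    (hmono : ∀ I J : Finset (Fin k), I ⊆ J → K I ⊆ K J)
    (hconn : ∀ I : Finset (Fin k), HomConnected (K I) ((I.card : ℤ) - 2))
    (lam : V → Fin k)
    (hlab : ∀ I : Finset (Fin k), ∀ v : V, {v} ∈ K I → lam v ∈ I) :
    ∃ s ∈ K Finset.univ, s.card = k ∧ Set.InjOn lam ↑s := by
  obtain ⟨c, hc⟩ := exists_isFillingFamily (hcx ∅).1 hmono hconn k
  have hcard : #(Finset.univ : Finset (Fin k)) ≤ k := by simp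
  have hcoeff : labelMap lam (c Finset.univ) Finset.univ ≠ 0 := by
    rw [hc.labelMap_eq (fun I _ hs => image_subset_of_mem (hcx I) (hlab I) hs) _ hcard,
      Finsupp.single_eq_same]
    exact one_ne_zero
  obtain ⟨s, hs, hinj, -⟩ := exists_injOn_of_labelMap_apply_ne_zero hcoeff
  obtain ⟨hsK, hscard⟩ := (hc.2 _ hcard).1 s hs
  exact ⟨s, hsK, by simpa using hscard, hinj⟩

/-- Sperner–Meshulam lemma. Let `{K^I}_{I ⊆ [k]}` be simplicial complexes
with `K^I ⊆ K^J` for `I ⊆ J`, each `K^I` homologically `(|I|-2)`-connected over `ℤ/2`, and let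
`λ` label the vertices so that `λ(v) ∈ I` whenever `v` is a vertex of `K^I`. Then `K^{[k]}`
has a `(k-1)`-dimensional simplex whose vertices get distinct labels. -/
theorem sperner_meshulam {V : Type*} [DecidableEq V] (k : ℕ) (hk : 0 < k)
    (K : Finset (Fin k) → Set (Finset V))
    (hcx : ∀ I, IsComplex (K I))
    (hmono : ∀ I J : Finset (Fin k), I ⊆ J → K I ⊆ K J)
    (hconn : ∀ I : Finset (Fin k), HomConnected (K I) ((I.card : ℤ) - 2))
    (lam : V → Fin k)
    (hlab : ∀ I : Finset (Fin k), ∀ v : V, {v} ∈ K I → lam v ∈ I) :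
    ∃ s ∈ K Finset.univ, s.card = k ∧ Set.InjOn lam ↑s :=
  sperner_meshulam_general k K hcx hmono hconn lam hlab
end

section
/- Given d+1 finite sets of points P_1, ..., P_{d+1} in R^d, each containing the origin in its convex hull, there exists a choice of one point p_i ∈ P_i for each i such that the origin lies in the convex hull of {p_1, ..., p_{d+1}}. Moreover, this convex statement follows from the conic version by the standard lifting x ↦ (x,1) into R^{d+1}. -/
/-!
Among all colourful selections choose one whose convex hull `K` is closest to the origin, and let
`q` be the point of `K` nearest to `0`. If `q ≠ 0`, then `⟪q, y⟫ ≥ ‖q‖²` on `K`, so by Carathéodory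
`q` is a positive combination of affinely independent points of the selection lying on the
hyperplane `⟪q, ·⟫ = ‖q‖²`. That hyperplane misses `0`, so these points are linearly independent
and at most `d` colours are used. Replacing the point of an unused colour `i` by some `x ∈ P i`
with `⟪q, x⟫ ≤ 0` keeps `q` in the hull, where it is again nearest to `0` by the choice of the
selection; hence `⟪q, x⟫ ≥ ‖q‖² > 0`, a contradiction.
-/

open Finset Module Metric Set
open scoped RealInnerProductSpace

/-- The lifting `x ↦ (x, 1)` from `ℝ^d` to `ℝ^{d+1}`. -/
def lift {d : ℕ} (x : Fin d → ℝ) : Fin (d + 1) → ℝ := Fin.snoc x 1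

theorem AffineIndependent.linearIndependent_of_forall_apply_eq {k V ι : Type*} [Field k]
    [AddCommGroup V] [Module k V] {p : ι → V} (hp : AffineIndependent k p) (f : V →ₗ[k] k)
    {c : k} (hc : c ≠ 0) (hf : ∀ i, f (p i) = c) : LinearIndependent k p := by
  refine linearIndependent_iff'.2 fun s g hg => hp.eq_zero_of_sum_eq_zero ?_ hg
  have hfg := congrArg f hg
  simp only [map_sum, map_smul, hf, smul_eq_mul, ← Finset.sum_mul, map_zero] at hfg
  exact (mul_eq_zero.1 hfg).resolve_right hc

theorem zero_mem_convexHull_image {E F : Type*} [AddCommGroup E] [Module ℝ E] [AddCommGroup F]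
    [Module ℝ F] (f : E →ₗ[ℝ] F) {s : Set E} (h : (0 : E) ∈ convexHull ℝ s) :
    (0 : F) ∈ convexHull ℝ (f '' s) :=
  f.image_convexHull s ▸ ⟨0, h, map_zero f⟩

section InnerProductSpace

variable {ι E : Type*} [NormedAddCommGroup E] [InnerProductSpace ℝ E]

theorem inner_self_le_inner_of_isMinOn {K : Set E} (hK : Convex ℝ K) {q w : E} (hq : q ∈ K)
    (hmin : IsMinOn norm K q) (hw : w ∈ K) : ⟪q, q⟫ ≤ ⟪q, w⟫ := by
  have : Nonempty K := ⟨⟨q, hq⟩⟩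
  have hinf : ‖0 - q‖ = ⨅ v : K, ‖0 - (v : E)‖ := by
    simp only [zero_sub, norm_neg]
    refine le_antisymm (le_ciInf fun v => isMinOn_iff.1 hmin v v.2) (ciInf_le ?_ (⟨q, hq⟩ : K))
    exact ⟨0, forall_mem_range.2 fun _ => norm_nonneg _⟩
  have := (norm_eq_iInf_iff_real_inner_le_zero hK hq).1 hinf w hw
  rw [zero_sub, inner_neg_left, inner_sub_right] at this
  linarith

variable [Fintype ι] [FiniteDimensional ℝ E]

theorem exists_mem_convexHull_image_compl_of_isMinOn (hι : finrank ℝ E < Fintype.card ι)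
    {p : ι → E} {q : E} (hq : q ∈ convexHull ℝ (range p)) (hq0 : q ≠ 0)
    (hmin : IsMinOn norm (convexHull ℝ (range p)) q) :
    ∃ i, q ∈ convexHull ℝ (p '' {i}ᶜ) := by
  obtain ⟨κ, _, z, w, hzp, hz, hw0, hw1, hwz⟩ := eq_pos_convex_span_of_mem_convexHull hq
  have hface : ∀ j, ⟪q, z j⟫ = ⟪q, q⟫ := by
    have hle : ∀ j, ⟪q, q⟫ ≤ ⟪q, z j⟫ := fun j => inner_self_le_inner_of_isMinOn
      (convex_convexHull ℝ _) hq hmin (subset_convexHull ℝ _ (hzp ⟨j, rfl⟩))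
    have hsum : ∑ j, w j * ⟪q, q⟫ = ∑ j, w j * ⟪q, z j⟫ := by
      simp_rw [← Finset.sum_mul, hw1, one_mul, ← real_inner_smul_right, ← inner_sum, hwz]
    intro j
    have := (Finset.sum_eq_sum_iff_of_le fun j _ =>
      mul_le_mul_of_nonneg_left (hle j) (hw0 j).le).1 hsum j (mem_univ j)
    exact (mul_left_cancel₀ (hw0 j).ne' this).symm
  have hcard : Fintype.card κ < Fintype.card ι :=
    ((hz.linearIndependent_of_forall_apply_eq (innerₛₗ ℝ q) (inner_self_ne_zero.2 hq0)
      hface).fintype_card_le_finrank).trans_lt hι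
  choose g hg using fun j => hzp ⟨j, rfl⟩
  obtain ⟨i, hi⟩ : ∃ i, i ∉ range g := by
    by_contra! hsurj
    exact hcard.not_ge (Fintype.card_le_of_surjective g hsurj)
  have hqz : q ∈ convexHull ℝ (range z) := hwz ▸ (convex_convexHull ℝ _).sum_mem
    (fun j _ => (hw0 j).le) hw1 fun j _ => subset_convexHull ℝ _ (mem_range_self j)
  refine ⟨i, convexHull_mono ?_ hqz⟩
  rintro _ ⟨j, rfl⟩
  exact ⟨g j, fun h => hi (h ▸ mem_range_self j), hg j⟩

theorem exists_colorful_zero_mem_convexHull_of_innerProductSpace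
    (hι : finrank ℝ E < Fintype.card ι) (P : ι → Set E) (hP : ∀ i, (P i).Finite)
    (h : ∀ i, (0 : E) ∈ convexHull ℝ (P i)) :
    ∃ p : ι → E, (∀ i, p i ∈ P i) ∧ (0 : E) ∈ convexHull ℝ (range p) := by
  classical
  have hne : (univ.pi P).Nonempty :=
    univ_pi_nonempty_iff.2 fun i => convexHull_nonempty_iff.1 ⟨0, h i⟩
  obtain ⟨p, hp, hpmin⟩ := exists_min_image (univ.pi P)
    (fun p => infDist 0 (convexHull ℝ (range p))) (Set.Finite.pi hP) hne
  have : Nonempty ι := Fintype.card_pos_iff.1 (Nat.zero_lt_of_lt hι)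
  obtain ⟨q, hqK, hq⟩ := ((finite_range p).isCompact_convexHull (𝕜 := ℝ)).exists_infDist_eq_dist
    (range_nonempty p).convexHull 0
  refine ⟨p, fun i => hp i (mem_univ i), ?_⟩
  by_contra h0
  have hq0 : q ≠ 0 := by rintro rfl; exact h0 hqK
  have hqmin : IsMinOn norm (convexHull ℝ (range p)) q := fun w hw => by
    simpa [hq] using infDist_le_dist_of_mem hw (x := 0)
  obtain ⟨i, hi⟩ := exists_mem_convexHull_image_compl_of_isMinOn hι hqK hq0 hqmin
  obtain ⟨x, hxP, hx⟩ : ∃ x ∈ P i, ⟪q, x⟫ ≤ ⟪q, 0⟫ :=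
    ((innerₛₗ ℝ q).concaveOn (convex_univ (𝕜 := ℝ))).exists_le_of_mem_convexHull
      (subset_univ _) (h i)
  set p' := Function.update p i x
  have hp' : p' ∈ univ.pi P := fun j _ => by
    rcases eq_or_ne j i with rfl | hj
    · simpa [p'] using hxP
    · simpa [p', hj] using hp j (mem_univ j)
  have hqK' : q ∈ convexHull ℝ (range p') := by
    refine convexHull_mono ?_ hi
    rintro _ ⟨j, hj, rfl⟩
    exact ⟨j, Function.update_of_ne hj x p⟩
  have hxK' : x ∈ convexHull ℝ (range p') :=
    subset_convexHull ℝ _ ⟨i, Function.update_self i x p⟩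
  have hqmin' : IsMinOn norm (convexHull ℝ (range p')) q := fun w hw => calc
    ‖q‖ = infDist 0 (convexHull ℝ (range p)) := by rw [hq, dist_zero_left]
    _ ≤ infDist 0 (convexHull ℝ (range p')) := hpmin p' hp'
    _ ≤ ‖w‖ := by simpa using infDist_le_dist_of_mem hw (x := 0)
  have := inner_self_le_inner_of_isMinOn (convex_convexHull ℝ _) hqK' hqmin' hxK'
  rw [inner_zero_right] at hx
  exact hq0 (inner_self_eq_zero.1 (le_antisymm (this.trans hx) real_inner_self_nonneg))

end InnerProductSpace

theorem exists_colorful_zero_mem_convexHull {ι E : Type*} [Fintype ι] [AddCommGroup E]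
    [Module ℝ E] [FiniteDimensional ℝ E] (hι : finrank ℝ E < Fintype.card ι) (P : ι → Set E)
    (hP : ∀ i, (P i).Finite) (h : ∀ i, (0 : E) ∈ convexHull ℝ (P i)) :
    ∃ p : ι → E, (∀ i, p i ∈ P i) ∧ (0 : E) ∈ convexHull ℝ (range p) := by
  classical
  let e : E ≃ₗ[ℝ] EuclideanSpace ℝ (Fin (finrank ℝ E)) :=
    LinearEquiv.ofFinrankEq _ _ finrank_euclideanSpace_fin.symm
  obtain ⟨p, hp, h0⟩ := exists_colorful_zero_mem_convexHull_of_innerProductSpace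
    (by rwa [finrank_euclideanSpace_fin]) (fun i => e '' P i) (fun i => (hP i).image e)
    fun i => zero_mem_convexHull_image e.toLinearMap (h i)
  refine ⟨e.symm ∘ p, fun i => ?_, ?_⟩
  · obtain ⟨x, hx, hxp⟩ := hp i
    simpa [← hxp] using hx
  · rw [range_comp]
    exact zero_mem_convexHull_image e.symm.toLinearMap h0

theorem sum_smul_lift {d : ℕ} (s : Finset (Fin d → ℝ)) (c : (Fin d → ℝ) → ℝ) :
    ∑ x ∈ s, c x • lift x = Fin.snoc (∑ x ∈ s, c x • x) (∑ x ∈ s, c x) := by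
  ext k
  induction k using Fin.lastCases <;> simp [lift, Finset.sum_apply]

theorem mem_convexHull_iff_lift_eq_sum {d : ℕ} (y : Fin d → ℝ) (Q : Finset (Fin d → ℝ)) :
    y ∈ convexHull ℝ (Q : Set (Fin d → ℝ)) ↔
      ∃ c : (Fin d → ℝ) → ℝ, (∀ x, 0 ≤ c x) ∧ lift y = ∑ x ∈ Q, c x • lift x := by
  classical
  simp_rw [Finset.mem_convexHull', sum_smul_lift]
  simp only [lift, Fin.snoc_inj]
  constructor
  · rintro ⟨w, hw0, hw1, hwy⟩
    refine ⟨fun x => if x ∈ Q then w x else 0, fun x => ?_, ?_, ?_⟩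
    · dsimp only
      split_ifs with hx
      exacts [hw0 x hx, le_rfl]
    · simpa [ite_smul] using hwy.symm
    · simpa using hw1.symm
  · rintro ⟨c, hc0, hcy, hc1⟩
    exact ⟨c, fun x _ => hc0 x, hc1.symm, hcy.symm⟩

/-- Bárány's colorful Carathéodory theorem, with the lifting reduction.
Given `d+1` finite sets of points in `ℝ^d`, each containing the origin in its convex hull,
one can select one point from each set so that the origin lies in the convex hull of the
selection. Moreover, for any finite `Q ⊆ ℝ^d`, the origin lies in the convex hull of `Q` iff
the vector `(0,…,0,1)` lies in the conic hull of the lifted set `{(x,1) : x ∈ Q} ⊆ ℝ^{d+1}`,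
which reduces this convex statement to the conic colorful Carathéodory theorem. -/
theorem colorful_caratheodory_real (d : ℕ) (P : Fin (d + 1) → Finset (Fin d → ℝ))
    (h : ∀ i, (0 : Fin d → ℝ) ∈ convexHull ℝ (P i : Set (Fin d → ℝ))) :
    (∃ p : Fin (d + 1) → (Fin d → ℝ), (∀ i, p i ∈ P i) ∧
        (0 : Fin d → ℝ) ∈ convexHull ℝ (Set.range p)) ∧
    (∀ Q : Finset (Fin d → ℝ),
      (0 : Fin d → ℝ) ∈ convexHull ℝ (Q : Set (Fin d → ℝ)) ↔
        ∃ c : (Fin d → ℝ) → ℝ, (∀ x, 0 ≤ c x) ∧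
          lift (0 : Fin d → ℝ) = ∑ x ∈ Q, c x • lift x) :=
  ⟨exists_colorful_zero_mem_convexHull (by simp) (fun i => (P i : Set (Fin d → ℝ)))
    (fun i => (P i).finite_toSet) h,
    mem_convexHull_iff_lift_eq_sum 0⟩
end
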